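/- Let N ≥ 1 and let C be an N×N real matrix such that the permutation matrix P* minimizing ⟨C, P⟩_F over all N×N permutation matrices is unique. For each β > 0, let B̂_β be the unique minimizer of S_{β,C}(B) := ⟨C, B⟩_F − (1/β)·H(B) over the set of N×N doubly stochastic matrices. Then B̂_β converges entrywise to P* as β → ∞. -/

import Mathlib

open Filter Topology

/-- An `N × N` real matrix is doubly stochastic if all its entries are non-negative
and every row sum and every column sum equals 1. -/
def IsDoublyStochastic {N : ℕ} (B : Matrix (Fin N) (Fin N) ℝ) : Prop :=
  (∀ i j, 0 ≤ B i j) ∧ (∀ i, ∑ j, B i j = 1) ∧ (∀ j, ∑ i, B i j = 1)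

/-- The Frobenius inner product `⟨X, Y⟩_F = Σ_{ij} X_{ij} Y_{ij}`. -/
def frob {N : ℕ} (X Y : Matrix (Fin N) (Fin N) ℝ) : ℝ :=
  ∑ i, ∑ j, X i j * Y i j

/-- The entropy `H(B) = -Σ_{ij} B_{ij} log B_{ij}` (with `0 log 0 = 0`, which is
automatic since `Real.log 0 = 0`). -/
noncomputable def entH {N : ℕ} (B : Matrix (Fin N) (Fin N) ℝ) : ℝ :=
  -∑ i, ∑ j, B i j * Real.log (B i j)

/-- The entropy-regularized objective `S_{β,C}(B) = ⟨C, B⟩_F - (1/β) H(B)`. -/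
noncomputable def Sobj {N : ℕ} (β : ℝ) (C B : Matrix (Fin N) (Fin N) ℝ) : ℝ :=
  frob C B - (1 / β) * entH B

/-- The permutation matrix of `σ`: `P_{ij} = 1` if `j = σ i`, else `0`. -/
def permMat {N : ℕ} (σ : Equiv.Perm (Fin N)) : Matrix (Fin N) (Fin N) ℝ :=
  Matrix.of fun i j => if σ i = j then 1 else 0

/-- A matrix is a permutation matrix if it arises from some permutation. -/
def IsPermMatrix {N : ℕ} (P : Matrix (Fin N) (Fin N) ℝ) : Prop :=
  ∃ σ : Equiv.Perm (Fin N), P = permMat σ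

/-!
Write a doubly stochastic `B` as a convex combination `∑ w_σ P_σ` of permutation matrices
(Birkhoff). Both `B_ij - P*_ij` and `⟨C, B⟩ - ⟨C, P*⟩` are then `w`-averages of their values at
the `P_σ`: the first has modulus at most `1` and vanishes at `P*`, the second is at least the gap
`δ > 0` away from `P*`. Hence `|B_ij - P*_ij| δ ≤ ⟨C, B⟩ - ⟨C, P*⟩`. Comparing `B̂_β` with `P*`,
whose entropy is `0`, bounds the right side by `H(B̂_β) / β ≤ N² / β`, so `B̂_β → P*` at
rate `O(1/β)`.
-/

theorem LinearMap.sub_eq_sum_mul_sub {ι R M : Type*} [Fintype ι] [CommRing R] [AddCommGroup M]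
    [Module R M] (L : M →ₗ[R] R) (w : ι → R) (hw : ∑ σ, w σ = 1) (x : ι → M) (p : M) :
    L (∑ σ, w σ • x σ) - L p = ∑ σ, w σ * (L (x σ) - L p) := by
  simp only [map_sum, map_smul, smul_eq_mul, mul_sub, Finset.sum_sub_distrib, ← Finset.sum_mul,
    hw, one_mul]

theorem abs_sum_mul_mul_le_sum_mul {ι R : Type*} [CommRing R] [LinearOrder R]
    [IsStrictOrderedRing R] (s : Finset ι) {w e g : ι → R} {δ : R}
    (hw : ∀ σ, 0 ≤ w σ) (hδ : 0 ≤ δ) (heg : ∀ σ, |e σ| * δ ≤ g σ) :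
    |∑ σ ∈ s, w σ * e σ| * δ ≤ ∑ σ ∈ s, w σ * g σ :=
  calc |∑ σ ∈ s, w σ * e σ| * δ ≤ (∑ σ ∈ s, |w σ * e σ|) * δ := by
        gcongr; exact Finset.abs_sum_le_sum_abs _ _
    _ = ∑ σ ∈ s, w σ * (|e σ| * δ) := by
        rw [Finset.sum_mul]
        exact Finset.sum_congr rfl fun σ _ => by rw [abs_mul, abs_of_nonneg (hw σ)]; ring
    _ ≤ ∑ σ ∈ s, w σ * g σ := by gcongr with σ; exacts [hw σ, heg σ]

theorem exists_pos_le_of_pos_of_ne {ι : Type*} [Finite ι] (g : ι → ℝ) (τ : ι)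
    (hg : ∀ σ, σ ≠ τ → 0 < g σ) : ∃ δ, 0 < δ ∧ ∀ σ, σ ≠ τ → δ ≤ g σ := by
  classical
  have : Nonempty ι := ⟨τ⟩
  -- the value `1` at `τ` keeps the minimum positive even when `τ` is the only index
  obtain ⟨σ₀, hσ₀⟩ := Finite.exists_min fun σ => if σ = τ then 1 else g σ
  refine ⟨if σ₀ = τ then 1 else g σ₀, ?_, fun σ hσ => by simpa [hσ] using hσ₀ σ⟩
  split_ifs with h
  exacts [one_pos, hg σ₀ h]

theorem permMat_eq_permMatrix {N : ℕ} (σ : Equiv.Perm (Fin N)) :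
    permMat σ = σ.permMatrix ℝ := by
  ext i j
  simp [permMat, Equiv.Perm.permMatrix, PEquiv.toMatrix_apply, eq_comm]

theorem isDoublyStochastic_iff_mem_doublyStochastic {N : ℕ} (B : Matrix (Fin N) (Fin N) ℝ) :
    IsDoublyStochastic B ↔ B ∈ doublyStochastic ℝ (Fin N) :=
  mem_doublyStochastic_iff_sum.symm

theorem isDoublyStochastic_permMat {N : ℕ} (σ : Equiv.Perm (Fin N)) :
    IsDoublyStochastic (permMat σ) := by
  rw [isDoublyStochastic_iff_mem_doublyStochastic, permMat_eq_permMatrix]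
  exact permMatrix_mem_doublyStochastic

theorem IsDoublyStochastic.exists_eq_sum_permMat {N : ℕ} {B : Matrix (Fin N) (Fin N) ℝ}
    (hB : IsDoublyStochastic B) :
    ∃ w : Equiv.Perm (Fin N) → ℝ, (∀ σ, 0 ≤ w σ) ∧ ∑ σ, w σ = 1 ∧
      B = ∑ σ, w σ • permMat σ := by
  obtain ⟨w, hw0, hw1, hwB⟩ := exists_eq_sum_perm_of_mem_doublyStochastic
    ((isDoublyStochastic_iff_mem_doublyStochastic B).1 hB)
  exact ⟨w, hw0, hw1, by simp only [permMat_eq_permMatrix, hwB]⟩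

theorem permMat_injective {N : ℕ} : Function.Injective (permMat (N := N)) := by
  intro σ τ h
  refine Equiv.ext fun i => ?_
  simpa [permMat, eq_comm] using congrFun (congrFun h i) (σ i)

theorem abs_permMat_sub_permMat_le_one {N : ℕ} (σ τ : Equiv.Perm (Fin N)) (i j : Fin N) :
    |permMat σ i j - permMat τ i j| ≤ 1 := by
  simp only [permMat, Matrix.of_apply]
  split_ifs <;> norm_num

theorem entH_permMat {N : ℕ} (σ : Equiv.Perm (Fin N)) : entH (permMat σ) = 0 := by
  have h : ∀ i j, permMat σ i j * Real.log (permMat σ i j) = 0 := by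
    intro i j
    simp only [permMat, Matrix.of_apply]
    split_ifs <;> simp
  simp [entH, h]

theorem entH_le_sq {N : ℕ} {B : Matrix (Fin N) (Fin N) ℝ} (hB : ∀ i j, 0 ≤ B i j) :
    entH B ≤ (N : ℝ) ^ 2 := by
  have h : ∀ i j, -(B i j * Real.log (B i j)) ≤ 1 := fun i j => by
    have := Real.negMulLog_le_one_sub_self (hB i j)
    rw [Real.negMulLog, neg_mul] at this
    linarith [hB i j]
  calc entH B = ∑ i, ∑ j, -(B i j * Real.log (B i j)) := by simp [entH]
    _ ≤ ∑ _i : Fin N, ∑ _j : Fin N, (1 : ℝ) := by gcongr with i _ j _; exact h i j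
    _ = (N : ℝ) ^ 2 := by simp [sq]

@[simps]
noncomputable def frobLinearMap {N : ℕ} (C : Matrix (Fin N) (Fin N) ℝ) :
    Matrix (Fin N) (Fin N) ℝ →ₗ[ℝ] ℝ where
  toFun := frob C
  map_add' A B := by simp [frob, mul_add, Finset.sum_add_distrib]
  map_smul' a B := by
    simp only [frob, Matrix.smul_apply, smul_eq_mul, RingHom.id_apply, Finset.mul_sum]
    exact Finset.sum_congr rfl fun i _ => Finset.sum_congr rfl fun j _ => by ring

theorem exists_pos_abs_sub_permMat_mul_le_frob_sub {N : ℕ} (C : Matrix (Fin N) (Fin N) ℝ)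
    (τ : Equiv.Perm (Fin N)) (hτ : ∀ σ, σ ≠ τ → frob C (permMat τ) < frob C (permMat σ)) :
    ∃ δ, 0 < δ ∧ ∀ B, IsDoublyStochastic B → ∀ i j,
      |B i j - permMat τ i j| * δ ≤ frob C B - frob C (permMat τ) := by
  obtain ⟨δ, hδ, hδ_le⟩ := exists_pos_le_of_pos_of_ne
    (fun σ => frob C (permMat σ) - frob C (permMat τ)) τ fun σ hσ => sub_pos.2 (hτ σ hσ)
  refine ⟨δ, hδ, fun B hB i j => ?_⟩
  obtain ⟨w, hw0, hw1, rfl⟩ := hB.exists_eq_sum_permMat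
  have hentry := (Matrix.entryLinearMap ℝ ℝ i j).sub_eq_sum_mul_sub w hw1 permMat (permMat τ)
  have hfrob := (frobLinearMap C).sub_eq_sum_mul_sub w hw1 permMat (permMat τ)
  simp only [Matrix.entryLinearMap_apply, frobLinearMap_apply] at hentry hfrob
  rw [hentry, hfrob]
  refine abs_sum_mul_mul_le_sum_mul _ hw0 hδ.le fun σ => ?_
  rcases eq_or_ne σ τ with rfl | hσ
  · simp
  · calc |permMat σ i j - permMat τ i j| * δ ≤ 1 * δ := by
          gcongr; exact abs_permMat_sub_permMat_le_one σ τ i j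
      _ ≤ frob C (permMat σ) - frob C (permMat τ) := (one_mul δ).trans_le (hδ_le σ hσ)

theorem frob_sub_mul_le_entH_sub_of_sobj_le {N : ℕ} {β : ℝ} (hβ : 0 < β)
    {C B P : Matrix (Fin N) (Fin N) ℝ} (h : Sobj β C B ≤ Sobj β C P) :
    (frob C B - frob C P) * β ≤ entH B - entH P := by
  unfold Sobj at h
  calc (frob C B - frob C P) * β ≤ (1 / β * (entH B - entH P)) * β := by gcongr; linarith
    _ = entH B - entH P := by field_simp

theorem sobj_minimizer_tendsto_unique_perm_general (N : ℕ)
    (C : Matrix (Fin N) (Fin N) ℝ)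
    (Pstar : Matrix (Fin N) (Fin N) ℝ) (hPstar : IsPermMatrix Pstar)
    (huniq : ∀ P : Matrix (Fin N) (Fin N) ℝ, IsPermMatrix P → P ≠ Pstar →
      frob C Pstar < frob C P)
    (Bh : ℝ → Matrix (Fin N) (Fin N) ℝ)
    (hBh : ∀ β : ℝ, 0 < β → IsDoublyStochastic (Bh β) ∧
      ∀ B : Matrix (Fin N) (Fin N) ℝ, IsDoublyStochastic B →
        Sobj β C (Bh β) ≤ Sobj β C B) :
    ∀ i j, Tendsto (fun β => Bh β i j) atTop (𝓝 (Pstar i j)) := by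
  intro i j
  obtain ⟨τ, rfl⟩ := hPstar
  obtain ⟨δ, hδ, hgap⟩ := exists_pos_abs_sub_permMat_mul_le_frob_sub C τ
    fun σ hσ => huniq _ ⟨σ, rfl⟩ (permMat_injective.ne hσ)
  have hbound : ∀ β, 0 < β → dist (Bh β i j) (permMat τ i j) ≤ (N : ℝ) ^ 2 / δ / β := by
    intro β hβ
    obtain ⟨hds, hmin⟩ := hBh β hβ
    have hsobj := frob_sub_mul_le_entH_sub_of_sobj_le hβ (hmin _ (isDoublyStochastic_permMat τ))
    rw [Real.dist_eq, div_div, le_div_iff₀ (by positivity)]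
    calc |Bh β i j - permMat τ i j| * (δ * β)
        = |Bh β i j - permMat τ i j| * δ * β := by ring
      _ ≤ (frob C (Bh β) - frob C (permMat τ)) * β := by gcongr; exact hgap _ hds i j
      _ ≤ entH (Bh β) := by simpa [entH_permMat] using hsobj
      _ ≤ (N : ℝ) ^ 2 := entH_le_sq hds.1
  rw [tendsto_iff_dist_tendsto_zero]
  exact squeeze_zero' (Eventually.of_forall fun β => dist_nonneg)
    ((eventually_gt_atTop 0).mono hbound) (tendsto_const_nhds.div_atTop tendsto_id)

/-- Cold-limit claim after Theorem 2 of the paper: if the permutation matrix `P*`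
minimizing `⟨C, P⟩_F` is unique and `B̂_β` minimizes the entropy-regularized
objective `S_{β,C}` over doubly stochastic matrices, then `B̂_β → P*` entrywise
as `β → ∞`. -/
theorem sobj_minimizer_tendsto_unique_perm (N : ℕ) (hN : 1 ≤ N)
    (C : Matrix (Fin N) (Fin N) ℝ)
    (Pstar : Matrix (Fin N) (Fin N) ℝ) (hPstar : IsPermMatrix Pstar)
    (huniq : ∀ P : Matrix (Fin N) (Fin N) ℝ, IsPermMatrix P → P ≠ Pstar →
      frob C Pstar < frob C P)
    (Bh : ℝ → Matrix (Fin N) (Fin N) ℝ)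
    (hBh : ∀ β : ℝ, 0 < β → IsDoublyStochastic (Bh β) ∧
      ∀ B : Matrix (Fin N) (Fin N) ℝ, IsDoublyStochastic B →
        Sobj β C (Bh β) ≤ Sobj β C B) :
    ∀ i j, Tendsto (fun β => Bh β i j) atTop (𝓝 (Pstar i j)) :=
  sobj_minimizer_tendsto_unique_perm_general N C Pstar hPstar huniq Bh hBh
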